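/- Let A be a dual Banach algebra and φ a weak*-continuous character on A. If A is Johnson pseudo-Connes amenable, then A is φ-Connes amenable; that is, there exists a bounded linear functional m on σwc(A^*) with m(φ) = 1 and m(f·a) = φ(a) m(f) for all a ∈ A and f ∈ σwc(A^*). -/

import Mathlib

open Filter Topology ContinuousLinearMap

set_option maxHeartbeats 1000000
set_option linter.unusedVariables false
set_option synthInstance.maxHeartbeats 200000

noncomputable section

section DualBanach

variable {A : Type*} [NonUnitalNormedRing A] [NormedSpace ℂ A]
  [IsScalarTower ℂ A A] [SMulCommClass ℂ A A]

/-- Left multiplication `x ↦ a * x` as a continuous linear map. -/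
def mulL (a : A) : A →L[ℂ] A := ContinuousLinearMap.mul ℂ A a

/-- Right multiplication `x ↦ x * a` as a continuous linear map. -/
def mulR (a : A) : A →L[ℂ] A := (ContinuousLinearMap.mul ℂ A).flip a

@[simp] lemma mulL_apply (a x : A) : mulL a x = a * x := rfl
@[simp] lemma mulR_apply (a x : A) : mulR a x = x * a := rfl

/-- The canonical evaluation of `a : A` on a submodule of the dual, giving a
functional on that submodule. -/
def evalOn (S : Submodule ℂ (A →L[ℂ] ℂ)) (a : A) : S →L[ℂ] ℂ :=
  (ContinuousLinearMap.apply ℂ ℂ a).comp S.subtypeL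

/-- A dual Banach algebra structure on `A`: a closed submodule `carrier` of the
dual `A⋆` (closed under the module actions) such that `A` is canonically
isometrically isomorphic to the dual of `carrier`. -/
structure DualStructure (A : Type*) [NonUnitalNormedRing A] [NormedSpace ℂ A]
    [IsScalarTower ℂ A A] [SMulCommClass ℂ A A] where
  carrier : Submodule ℂ (A →L[ℂ] ℂ)
  isClosed' : IsClosed (carrier : Set (A →L[ℂ] ℂ))
  lact_mem' : ∀ (a : A) (f : A →L[ℂ] ℂ), f ∈ carrier → f.comp (mulR a) ∈ carrier
  ract_mem' : ∀ (a : A) (f : A →L[ℂ] ℂ), f ∈ carrier → f.comp (mulL a) ∈ carrier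
  bijective' : Function.Bijective (fun a : A => evalOn carrier a)
  isometry' : ∀ a : A,
    sSup {r : ℝ | ∃ f : A →L[ℂ] ℂ, f ∈ carrier ∧ ‖f‖ ≤ 1 ∧ r = ‖f a‖} = ‖a‖

/-- `A`, regarded with its weak-star topology `σ(A, A_*)`. -/
def WkA (P : DualStructure A) : Type _ := A

/-- The identity map `WkA P → A`. -/
def WkA.un (P : DualStructure A) : WkA P → A := fun a => a

/-- The identity map `A → WkA P`. -/
def WkA.mk (P : DualStructure A) : A → WkA P := fun a => a

instance (P : DualStructure A) : TopologicalSpace (WkA P) :=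
  TopologicalSpace.induced
    (fun a => fun f : P.carrier => (f : A →L[ℂ] ℂ) (WkA.un P a)) inferInstance

/-- Weak-star continuity of a map out of a dual Banach algebra. -/
def WkCont (P : DualStructure A) {E : Type*} [TopologicalSpace E] (g : A → E) : Prop :=
  Continuous fun a : WkA P => g (WkA.un P a)

/-- The dual of the projective tensor product `A ⊗̂ A`, realized as the space of
bounded bilinear functionals on `A × A`. -/
abbrev TDual (A : Type*) [NonUnitalNormedRing A] [NormedSpace ℂ A]
    [IsScalarTower ℂ A A] [SMulCommClass ℂ A A] := A →L[ℂ] A →L[ℂ] ℂ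

/-- The left action `a · T` of `A` on `(A ⊗̂ A)⋆`: `(a·T)(b ⊗ c) = T(b ⊗ ca)`. -/
def lactOp (a : A) : TDual A →L[ℂ] TDual A :=
  compL ℂ A (A →L[ℂ] ℂ) (A →L[ℂ] ℂ) ((compL ℂ A A ℂ).flip (mulR a))

/-- The right action `T · a` of `A` on `(A ⊗̂ A)⋆`: `(T·a)(b ⊗ c) = T(ab ⊗ c)`. -/
def ractOp (a : A) : TDual A →L[ℂ] TDual A :=
  (compL ℂ A A (A →L[ℂ] ℂ)).flip (mulL a)

@[simp] lemma lactOp_apply (a : A) (T : TDual A) (b c : A) :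
    lactOp a T b c = T b (c * a) := rfl

@[simp] lemma ractOp_apply (a : A) (T : TDual A) (b c : A) :
    ractOp a T b c = T (a * b) c := rfl

/-- `σwc((A ⊗̂ A)⋆)`: the set of bilinear functionals `T` for which both
`a ↦ a·T` and `a ↦ T·a` are weak-star–weak continuous. -/
def sigmaWC (P : DualStructure A) : Set (TDual A) :=
  {T | ∀ Φ : TDual A →L[ℂ] ℂ,
    WkCont P (fun a => Φ (lactOp a T)) ∧ WkCont P (fun a => Φ (ractOp a T))}

/-- `σwc((A ⊗̂ A)⋆)` as a submodule. -/
def sigmaWCsub (P : DualStructure A) : Submodule ℂ (TDual A) where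
  carrier := sigmaWC P
  zero_mem' := by
    intro Φ
    constructor <;>
    · show Continuous _
      have : (fun x : WkA P => Φ ((0 : TDual A →L[ℂ] TDual A) 0)) = fun _ => (0 : ℂ) := by
        funext x; simp
      simp only [map_zero]
      exact continuous_const
  add_mem' := by
    intro T S hT hS Φ
    constructor
    · have h := ((hT Φ).1).add ((hS Φ).1)
      show Continuous _
      simp only [map_add]; exact h
    · have h := ((hT Φ).2).add ((hS Φ).2)
      show Continuous _
      simp only [map_add]; exact h
  smul_mem' := by
    intro c T hT Φ
    constructor
    · have h := ((hT Φ).1).const_smul c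
      show Continuous _
      simp only [map_smul]; exact h
    · have h := ((hT Φ).2).const_smul c
      show Continuous _
      simp only [map_smul]; exact h

lemma wkCont_of_mem (P : DualStructure A) {f : A →L[ℂ] ℂ} (hf : f ∈ P.carrier) :
    WkCont P (fun a => f a) := by
  have h1 : Continuous fun a : WkA P =>
      (fun g : P.carrier => (g : A →L[ℂ] ℂ) (WkA.un P a)) := continuous_induced_dom
  exact (continuous_apply (⟨f, hf⟩ : P.carrier)).comp h1

lemma wkCont_mulL (P : DualStructure A) (a : A) :
    Continuous fun x : WkA P => WkA.mk P (a * WkA.un P x) := by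
  apply continuous_induced_rng.2
  apply continuous_pi
  intro g
  exact wkCont_of_mem P (P.ract_mem' a g.1 g.2)

lemma wkCont_mulR (P : DualStructure A) (a : A) :
    Continuous fun x : WkA P => WkA.mk P (WkA.un P x * a) := by
  apply continuous_induced_rng.2
  apply continuous_pi
  intro g
  exact wkCont_of_mem P (P.lact_mem' a g.1 g.2)

lemma ract_mem_sigmaWC (P : DualStructure A) {T : TDual A}
    (hT : T ∈ sigmaWC P) (a : A) : ractOp a T ∈ sigmaWC P := by
  intro Φ
  constructor
  · have key : ∀ a' : A, lactOp a' (ractOp a T) = ractOp a (lactOp a' T) := by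
      intro a'; ext b c; simp
    have h := (hT (Φ.comp (ractOp a))).1
    show Continuous _
    simp only [key]; exact h
  · have key : ∀ a' : A, ractOp a' (ractOp a T) = ractOp (a * a') T := by
      intro a'; ext b c; simp [mul_assoc]
    have h := ((hT Φ).2).comp (wkCont_mulL P a)
    show Continuous _
    simp only [key]; exact h

lemma lact_mem_sigmaWC (P : DualStructure A) {T : TDual A}
    (hT : T ∈ sigmaWC P) (a : A) : lactOp a T ∈ sigmaWC P := by
  intro Φ
  constructor
  · have key : ∀ a' : A, lactOp a' (lactOp a T) = lactOp (a' * a) T := by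
      intro a'; ext b c; simp [mul_assoc]
    have h := ((hT Φ).1).comp (wkCont_mulR P a)
    show Continuous _
    simp only [key]; exact h
  · have key : ∀ a' : A, ractOp a' (lactOp a T) = lactOp a (ractOp a' T) := by
      intro a'; ext b c; simp
    have h := (hT (Φ.comp (lactOp a))).2
    show Continuous _
    simp only [key]; exact h

/-- The adjoint of the multiplication map `π : A ⊗̂ A → A` applied to a
functional: `π⋆(f)(b ⊗ c) = f (b c)`. -/
def piStar (f : A →L[ℂ] ℂ) : TDual A :=
  (compL ℂ A A ℂ f).comp (ContinuousLinearMap.mul ℂ A)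

@[simp] lemma piStar_apply (f : A →L[ℂ] ℂ) (b c : A) : piStar f b c = f (b * c) := rfl

/-- Johnson pseudo-Connes amenability of a dual Banach algebra: there is a (not
necessarily bounded) net `(m i)` in `(A ⊗̂ A)⋆⋆` such that
`⟨T, a·mᵢ⟩ = ⟨T, mᵢ·a⟩` for all `T ∈ σwc((A ⊗̂ A)⋆)` and
`i⋆_{A_*} π⋆⋆(mᵢ) a → a` in norm for every `a`; the element `b i ∈ A`
represents `i⋆_{A_*} π⋆⋆(mᵢ)` via `f (b i) = mᵢ (π⋆ f)` for all `f ∈ A_*`. -/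
def IsJPCA (P : DualStructure A) : Prop :=
  ∃ (ι : Type) (pr : Preorder ι), Nonempty ι ∧
    (∀ i j : ι, ∃ k, pr.le i k ∧ pr.le j k) ∧
    ∃ (m : ι → (TDual A →L[ℂ] ℂ)) (b : ι → A),
      (∀ i (a : A), ∀ T ∈ sigmaWC P, m i (ractOp a T) = m i (lactOp a T)) ∧
      (∀ i, ∀ f ∈ P.carrier, f (b i) = m i (piStar f)) ∧
      (∀ a : A, Tendsto (fun i => b i * a) (@Filter.atTop ι pr) (nhds a))

end DualBanach

section Statements

variable {A : Type*} [NonUnitalNormedRing A] [NormedSpace ℂ A]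
  [IsScalarTower ℂ A A] [SMulCommClass ℂ A A]

/-- The left action `a · f` of `A` on `A⋆`: `(a·f)(x) = f(xa)`. -/
def lactA (a : A) : (A →L[ℂ] ℂ) →L[ℂ] (A →L[ℂ] ℂ) :=
  (compL ℂ A A ℂ).flip (mulR a)

/-- The right action `f · a` of `A` on `A⋆`: `(f·a)(x) = f(ax)`. -/
def ractA (a : A) : (A →L[ℂ] ℂ) →L[ℂ] (A →L[ℂ] ℂ) :=
  (compL ℂ A A ℂ).flip (mulL a)

@[simp] lemma lactA_apply (a : A) (f : A →L[ℂ] ℂ) (x : A) : lactA a f x = f (x * a) := rfl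
@[simp] lemma ractA_apply (a : A) (f : A →L[ℂ] ℂ) (x : A) : ractA a f x = f (a * x) := rfl

/-- `σwc(A⋆)`: the functionals `f ∈ A⋆` for which `a ↦ a·f` and `a ↦ f·a` are
weak-star–weak continuous. -/
def sigmaWCA (P : DualStructure A) : Set (A →L[ℂ] ℂ) :=
  {f | ∀ Ψ : (A →L[ℂ] ℂ) →L[ℂ] ℂ,
    WkCont P (fun a => Ψ (lactA a f)) ∧ WkCont P (fun a => Ψ (ractA a f))}

/-- `σwc(A⋆)` as a submodule of `A⋆`. -/
def sigmaWCAsub (P : DualStructure A) : Submodule ℂ (A →L[ℂ] ℂ) where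
  carrier := sigmaWCA P
  zero_mem' := by
    intro Ψ
    constructor <;>
    · show Continuous _
      simp only [map_zero]
      exact continuous_const
  add_mem' := by
    intro f g hf hg Ψ
    constructor
    · have h := ((hf Ψ).1).add ((hg Ψ).1)
      show Continuous _
      simp only [map_add]; exact h
    · have h := ((hf Ψ).2).add ((hg Ψ).2)
      show Continuous _
      simp only [map_add]; exact h
  smul_mem' := by
    intro c f hf Ψ
    constructor
    · have h := ((hf Ψ).1).const_smul c
      show Continuous _
      simp only [map_smul]; exact h
    · have h := ((hf Ψ).2).const_smul c
      show Continuous _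
      simp only [map_smul]; exact h
/-!
Pull a member `mᵢ` of the Johnson pseudo-Connes net back along `θ⋆ f = f ⊗ φ`. Since
`a · θ⋆ f = φ(a) θ⋆ f` and `θ⋆ f · a = θ⋆ (f · a)`, the commutation `mᵢ(T · a) = mᵢ(a · T)`
turns into `mᵢ(θ⋆ (f · a)) = φ(a) mᵢ(θ⋆ f)`. Moreover `θ⋆ φ = π⋆ φ`, so `mᵢ(θ⋆ φ) = φ(bᵢ)`,
which tends to `1` because `bᵢ a → a`; normalizing `mᵢ ∘ θ⋆` by a nonzero `φ(bᵢ)` gives the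
`φ`-mean.
-/

lemma mem_carrier_of_wkCont (P : DualStructure A) {φ : A →L[ℂ] ℂ} (hφ : WkCont P fun a => φ a) :
    φ ∈ P.carrier := by
  have hspan : (φ : A →ₗ[ℂ] ℂ) ∈ Submodule.span ℂ
      (Set.range fun g : P.carrier => ((g : A →L[ℂ] ℂ) : A →ₗ[ℂ] ℂ)) := by
    rw [LinearMap.mem_span_iff_continuous, ← induced_to_pi]
    exact hφ
  have hrange : (Set.range fun g : P.carrier => ((g : A →L[ℂ] ℂ) : A →ₗ[ℂ] ℂ))
      = coeLM ℂ '' (P.carrier : Set (A →L[ℂ] ℂ)) := by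
    ext; simp [eq_comm]
  rw [hrange, Submodule.span_image, Submodule.span_eq] at hspan
  obtain ⟨ψ, hψ, hψφ⟩ := hspan
  rwa [← ContinuousLinearMap.coe_injective hψφ]

lemma tendsto_apply_of_tendsto_mul_right {R 𝕜 ι : Type*} [Mul R] [TopologicalSpace R] [Field 𝕜]
    [TopologicalSpace 𝕜] [ContinuousMul 𝕜] {φ : R → 𝕜} (hφ : Continuous φ)
    (hmul : ∀ a b : R, φ (a * b) = φ a * φ b) (hne : φ ≠ 0) {l : Filter ι} {b : ι → R}
    (hb : ∀ a, Tendsto (fun i => b i * a) l (𝓝 a)) : Tendsto (fun i => φ (b i)) l (𝓝 1) := by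
  obtain ⟨a₀, ha₀⟩ : ∃ a, φ a ≠ 0 := by
    by_contra! h
    exact hne (funext h)
  have hlim : Tendsto (fun i => φ (b i * a₀) / φ a₀) l (𝓝 (φ a₀ / φ a₀)) :=
    ((hφ.tendsto a₀).comp (hb a₀)).div_const _
  simpa only [hmul, mul_div_assoc, div_self ha₀, mul_one] using hlim

/-- `θ⋆`, the adjoint of `θ : A ⊗̂ A → A`, `θ (b ⊗ c) = φ c • b`. -/
def thetaStar (φ : A →L[ℂ] ℂ) : (A →L[ℂ] ℂ) →L[ℂ] TDual A :=
  (smulRightL ℂ A (A →L[ℂ] ℂ)).flip φ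

@[simp] lemma thetaStar_apply (φ f : A →L[ℂ] ℂ) (b c : A) :
    thetaStar φ f b c = f b * φ c := rfl

lemma ractOp_thetaStar (φ : A →L[ℂ] ℂ) (a : A) (f : A →L[ℂ] ℂ) :
    ractOp a (thetaStar φ f) = thetaStar φ (ractA a f) := rfl

section Character

variable {φ : A →L[ℂ] ℂ} (hmul : ∀ a b : A, φ (a * b) = φ a * φ b)
include hmul

lemma lactOp_thetaStar (a : A) (f : A →L[ℂ] ℂ) :
    lactOp a (thetaStar φ f) = φ a • thetaStar φ f := by
  ext b c
  simp only [lactOp_apply, thetaStar_apply, hmul, smul_apply, smul_eq_mul]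
  ring

lemma thetaStar_self : thetaStar φ φ = piStar φ := by
  ext b c
  simp only [thetaStar_apply, piStar_apply, hmul]

lemma thetaStar_mem_sigmaWC (P : DualStructure A) (hwk : WkCont P fun a => φ a)
    {f : A →L[ℂ] ℂ} (hf : f ∈ sigmaWCA P) : thetaStar φ f ∈ sigmaWC P := by
  intro Φ
  constructor
  · have hlact (a : A) : Φ (lactOp a (thetaStar φ f)) = φ a * Φ (thetaStar φ f) := by
      rw [lactOp_thetaStar hmul, map_smul, smul_eq_mul]
    show Continuous fun a : WkA P => Φ (lactOp (WkA.un P a) (thetaStar φ f))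
    simp only [hlact]
    exact hwk.mul continuous_const
  · exact (hf (Φ.comp (thetaStar φ))).2

end Character

lemma exists_phiMean_of_commutes (P : DualStructure A) {φ : A →L[ℂ] ℂ}
    (hmul : ∀ a b : A, φ (a * b) = φ a * φ b) (hwk : WkCont P fun a => φ a)
    (m : TDual A →L[ℂ] ℂ) (hm : ∀ (a : A), ∀ T ∈ sigmaWC P, m (ractOp a T) = m (lactOp a T))
    (hmφ : m (piStar φ) ≠ 0) :
    ∃ M : sigmaWCAsub P →L[ℂ] ℂ,
      (∀ hφ : φ ∈ sigmaWCAsub P, M ⟨φ, hφ⟩ = 1) ∧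
      (∀ (f : sigmaWCAsub P) (a : A) (hfa : ractA a (f : A →L[ℂ] ℂ) ∈ sigmaWCAsub P),
        M ⟨ractA a (f : A →L[ℂ] ℂ), hfa⟩ = φ a * M f) := by
  refine ⟨(m (piStar φ))⁻¹ • (m ∘L thetaStar φ ∘L (sigmaWCAsub P).subtypeL), fun _ => ?_,
    fun f a _ => ?_⟩
  · simp only [smul_apply, comp_apply, Submodule.subtypeL_apply, smul_eq_mul,
      thetaStar_self hmul, inv_mul_cancel₀ hmφ]
  · have hθ : m (thetaStar φ (ractA a f)) = φ a * m (thetaStar φ f) := by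
      rw [← ractOp_thetaStar, hm a _ (thetaStar_mem_sigmaWC hmul P hwk f.2),
        lactOp_thetaStar hmul, map_smul, smul_eq_mul]
    simp only [smul_apply, comp_apply, Submodule.subtypeL_apply, smul_eq_mul, hθ]
    ring

theorem johnsonPseudoConnesAmenable_implies_phiConnesAmenable_general
    (P : DualStructure A) (φ : A →L[ℂ] ℂ)
    (hmul : ∀ a b : A, φ (a * b) = φ a * φ b) (hne : φ ≠ 0)
    (hwk : WkCont P fun a => φ a)
    (h : IsJPCA P) :
    ∃ m : sigmaWCAsub P →L[ℂ] ℂ,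
      (∀ hφ : φ ∈ sigmaWCAsub P, m ⟨φ, hφ⟩ = 1) ∧
      (∀ (f : sigmaWCAsub P) (a : A) (hfa : ractA a (f : A →L[ℂ] ℂ) ∈ sigmaWCAsub P),
        m ⟨ractA a (f : A →L[ℂ] ℂ), hfa⟩ = φ a * m f) := by
  obtain ⟨ι, pr, hι, hdir, m, b, hcomm, hrep, hb⟩ := h
  let := pr
  have : (atTop : Filter ι).NeBot := atTop_neBot_iff.2 ⟨hι, ⟨hdir⟩⟩
  obtain ⟨i, hi⟩ := ((tendsto_apply_of_tendsto_mul_right φ.continuous hmul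
    (DFunLike.coe_injective.ne hne) hb).eventually_ne one_ne_zero).exists
  have hmφ : m i (piStar φ) = φ (b i) := (hrep i φ (mem_carrier_of_wkCont P hwk)).symm
  exact exists_phiMean_of_commutes P hmul hwk (m i) (hcomm i) (hmφ ▸ hi)

/-- If a dual Banach algebra `A` is Johnson pseudo-Connes
amenable and `φ` is a weak-star continuous character on `A`, then `A` is
`φ`-Connes amenable: there is a bounded linear functional `m` on `σwc(A⋆)`
with `m(φ) = 1` and `m(f·a) = φ(a) m(f)` for all `a ∈ A`, `f ∈ σwc(A⋆)`. -/
theorem johnsonPseudoConnesAmenable_implies_phiConnesAmenable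
    [CompleteSpace A] (P : DualStructure A) (φ : A →L[ℂ] ℂ)
    (hmul : ∀ a b : A, φ (a * b) = φ a * φ b) (hne : φ ≠ 0)
    (hwk : WkCont P fun a => φ a)
    (h : IsJPCA P) :
    ∃ m : sigmaWCAsub P →L[ℂ] ℂ,
      (∀ hφ : φ ∈ sigmaWCAsub P, m ⟨φ, hφ⟩ = 1) ∧
      (∀ (f : sigmaWCAsub P) (a : A) (hfa : ractA a (f : A →L[ℂ] ℂ) ∈ sigmaWCAsub P),
        m ⟨ractA a (f : A →L[ℂ] ℂ), hfa⟩ = φ a * m f) :=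
  johnsonPseudoConnesAmenable_implies_phiConnesAmenable_general P φ hmul hne hwk h

end Statements
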